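/- arXiv:1611.02626 — 3 statements merged into one kernel-verified Lean document; each statement's English description precedes it below -/
import Mathlib

section
/- Define the bracket {w(p), w(q)}¹ = ((w(p) - w(q))/(p - q)) · (w(p) - w(q)) = (w(p)-w(q))²/(p-q) on functions of distinct points p, q. Then the cyclic sum of double brackets vanishes formally: if one treats w(p), w(q), w(r) as coordinates x, y, z on ℂ³ (for fixed distinct p, q, r) and defines the Poisson bracket of coordinate functions by {x,y} = (x-y)²/(p-q), {y,z} = (y-z)²/(q-r), {z,x} = (z-x)²/(r-p), extended as a biderivation, then {{x,y},z} + {{y,z},x} + {{z,x},y} = 0. -/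
theorem inv_mul_inv_add_inv_mul_inv_add_inv_mul_inv_eq_zero {K : Type*} [Field K] {a b c : K}
    (ha : a ≠ 0) (hb : b ≠ 0) (hc : c ≠ 0) (habc : a + b + c = 0) :
    a⁻¹ * b⁻¹ + b⁻¹ * c⁻¹ + c⁻¹ * a⁻¹ = 0 := by
  field_simp
  linear_combination habc

/-- Jacobi identity for the Atiyah–Hitchin bracket `{x,y} = (x-y)²/(p-q)` on
coordinates `x = w(p)`, `y = w(q)`, `z = w(r)`, extended as a biderivation:
`{{x,y},z} = ∂_x{x,y}·{x,z} + ∂_y{x,y}·{y,z}`, etc. -/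
theorem stmt_5 (p q r x y z : ℂ) (hpq : p ≠ q) (hqr : q ≠ r) (hrp : r ≠ p) :
    -- {{x,y},z}
    ((2 * (x - y) / (p - q)) * (-((z - x) ^ 2 / (r - p)))
      + (-(2 * (x - y)) / (p - q)) * ((y - z) ^ 2 / (q - r)))
    -- {{y,z},x}
    + ((2 * (y - z) / (q - r)) * (-((x - y) ^ 2 / (p - q)))
      + (-(2 * (y - z)) / (q - r)) * ((z - x) ^ 2 / (r - p)))
    -- {{z,x},y}
    + ((2 * (z - x) / (r - p)) * (-((y - z) ^ 2 / (q - r)))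
      + (-(2 * (z - x)) / (r - p)) * ((x - y) ^ 2 / (p - q))) = 0 := by
  -- Since (x - y) + (y - z) + (z - x) = 0, the Jacobiator factors through the cyclic sum,
  -- which vanishes because (p - q) + (q - r) + (r - p) = 0.
  calc _ = 2 * (x - y) * (y - z) * (z - x) *
        ((p - q)⁻¹ * (q - r)⁻¹ + (q - r)⁻¹ * (r - p)⁻¹ + (r - p)⁻¹ * (p - q)⁻¹) := by ring
    _ = 0 := by
      rw [inv_mul_inv_add_inv_mul_inv_add_inv_mul_inv_eq_zero (sub_ne_zero.2 hpq)
        (sub_ne_zero.2 hqr) (sub_ne_zero.2 hrp) (by ring), mul_zero]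
end

section
/- For an integer n ≥ 2 and fixed distinct nonzero complex numbers p, q, r, define the bracket on coordinates x = w(p), y = w(q), z = w(r) by {x,y} = ((pⁿ x - qⁿ y)/(p-q))(x-y) and cyclically. Then generically the Jacobi identity {{x,y},z} + c.p. = 0 fails; i.e., there exist p, q, r, x, y, z for which the cyclic sum is nonzero. -/
/-!
Expanding the double brackets by the Leibniz rule, the Jacobi sum at `x = y = 1, z = 0` is
`(f(q) - f(p)) · (f(p)(q - r) + f(q)(r - p) + f(r)(p - q)) / ((p - q)(q - r)(r - p))`.
The second factor is (up to sign) the determinant testing whether the points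
`(p, f p), (q, f q), (r, f r)` are collinear. For `f z = zⁿ` and `(p, q, r) = (1, 2, 4)`,
with `t = 2ⁿ`, the sum is `-(t - 1)² (t - 2) / 6`, which vanishes only for `n = 0, 1`.
-/

section Bracket

variable {K : Type*} [Field K]

/-- The bracket `{x, y}` of the coordinates `x = w p`, `y = w q`, with `fp = f p`, `fq = f q`. -/
def fBracket (fp fq p q x y : K) : K := (fp * x - fq * y) / (p - q) * (x - y)

def fBracketDerivLeft (fp fq p q x y : K) : K := (fp * (x - y) + (fp * x - fq * y)) / (p - q)

def fBracketDerivRight (fp fq p q x y : K) : K := (-(fq * (x - y)) - (fp * x - fq * y)) / (p - q)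

/-- `{{x,y},z} + {{y,z},x} + {{z,x},y}`, each outer bracket expanded as a biderivation:
`{{x,y},z} = ∂ₓ{x,y} · {x,z} + ∂_y{x,y} · {y,z}`, with `{x,z} = -{z,x}`. -/
def fJacobiator (fp fq fr p q r x y z : K) : K :=
  (fBracketDerivLeft fp fq p q x y * -fBracket fr fp r p z x
      + fBracketDerivRight fp fq p q x y * fBracket fq fr q r y z)
    + (fBracketDerivLeft fq fr q r y z * -fBracket fp fq p q x y
      + fBracketDerivRight fq fr q r y z * fBracket fr fp r p z x)
    + (fBracketDerivLeft fr fp r p z x * -fBracket fq fr q r y z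
      + fBracketDerivRight fr fp r p z x * fBracket fp fq p q x y)

theorem fJacobiator_one_one_zero {fp fq fr p q r : K} (hpq : p ≠ q) (hqr : q ≠ r)
    (hrp : r ≠ p) :
    fJacobiator fp fq fr p q r 1 1 0 =
      (fq - fp) * (fp * (q - r) + fq * (r - p) + fr * (p - q)) /
        ((p - q) * (q - r) * (r - p)) := by
  have hpq' := sub_ne_zero.mpr hpq
  have hqr' := sub_ne_zero.mpr hqr
  have hrp' := sub_ne_zero.mpr hrp
  simp only [fJacobiator, fBracket, fBracketDerivLeft, fBracketDerivRight]
  field_simp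
  ring

theorem fJacobiator_pow_one_two_four [CharZero K] (t : K) :
    fJacobiator 1 t (t ^ 2) 1 2 4 1 1 0 = -((t - 1) ^ 2 * (t - 2)) / 6 := by
  rw [fJacobiator_one_one_zero (by norm_num) (by norm_num) (by norm_num)]
  ring

end Bracket

/-- For `n ≥ 2`, the bracket `{x,y} = ((pⁿx - qⁿy)/(p-q))(x-y)` (extended as a
biderivation) fails the Jacobi identity: there is an explicit counterexample with
distinct nonzero `p, q, r`. -/
theorem stmt_7 (n : ℕ) (hn : 2 ≤ n) :
    ∃ p q r x y z : ℂ, p ≠ q ∧ q ≠ r ∧ r ≠ p ∧ p ≠ 0 ∧ q ≠ 0 ∧ r ≠ 0 ∧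
      -- {{x,y},z} + {{y,z},x} + {{z,x},y} ≠ 0
      (((p ^ n * (x - y) + (p ^ n * x - q ^ n * y)) / (p - q))
          * (-((r ^ n * z - p ^ n * x) / (r - p) * (z - x)))
        + ((-(q ^ n * (x - y)) - (p ^ n * x - q ^ n * y)) / (p - q))
          * ((q ^ n * y - r ^ n * z) / (q - r) * (y - z)))
      + (((q ^ n * (y - z) + (q ^ n * y - r ^ n * z)) / (q - r))
          * (-((p ^ n * x - q ^ n * y) / (p - q) * (x - y)))
        + ((-(r ^ n * (y - z)) - (q ^ n * y - r ^ n * z)) / (q - r))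
          * ((r ^ n * z - p ^ n * x) / (r - p) * (z - x)))
      + (((r ^ n * (z - x) + (r ^ n * z - p ^ n * x)) / (r - p))
          * (-((q ^ n * y - r ^ n * z) / (q - r) * (y - z)))
        + ((-(p ^ n * (z - x)) - (r ^ n * z - p ^ n * x)) / (r - p))
          * ((p ^ n * x - q ^ n * y) / (p - q) * (x - y))) ≠ 0 := by
  have ht1 : (2 : ℂ) ^ n ≠ 1 := by exact_mod_cast (Nat.one_lt_two_pow (by omega)).ne'
  have ht2 : (2 : ℂ) ^ n ≠ 2 := by
    have : 2 ^ 2 ≤ 2 ^ n := Nat.pow_le_pow_right two_pos hn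
    exact_mod_cast (by omega : 2 ^ n ≠ 2)
  refine ⟨1, 2, 4, 1, 1, 0, by norm_num, by norm_num, by norm_num, one_ne_zero,
    two_ne_zero, by norm_num, ?_⟩
  change fJacobiator (1 ^ n) (2 ^ n) (4 ^ n) 1 2 4 1 1 0 ≠ 0
  rw [one_pow, show (4 : ℂ) ^ n = (2 ^ n) ^ 2 by rw [← pow_mul, mul_comm, pow_mul]; norm_num,
    fJacobiator_pow_one_two_four]
  exact div_ne_zero (neg_ne_zero.mpr (mul_ne_zero (pow_ne_zero 2 (sub_ne_zero.mpr ht1))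
    (sub_ne_zero.mpr ht2))) (by norm_num)
end

section
/- Fix a natural number n and distinct complex numbers p, q, r. On ℂ⁶ with coordinates (a, a', b, b', c, c') representing (w(p), w'(p), w(q), w'(q), w(r), w'(r)) together with the formal second derivatives treated via the derivative bracket rule, the bracket {w(p), w(q)} = pⁿ w'(p) w(q) − qⁿ w'(q) w(p), with the induced rule {w'(p), w(q)} = n p^{n−1} w'(p) w(q) + pⁿ w''(p) w(q) − qⁿ w'(q) w'(p), satisfies the Jacobi identity: {{w(p),w(q)}, w(r)} + {{w(r),w(p)}, w(q)} + {{w(q),w(r)}, w(p)} = 0, where each outer bracket is expanded by the Leibniz rule. Concretely, the sum of the three explicit expanded expressions — (p^{2n} w(q) w''(p) w(r) − q^{2n} w(p) w''(q) w(r) − 2 pⁿ rⁿ w'(p) w'(r) w(q) + 2 qⁿ rⁿ w'(q) w'(r) w(p) + n p^{2n−1} w(q) w'(p) w(r) − n q^{2n−1} w(p) w'(q) w(r)) and its two cyclic permutations in (p,q,r) — equals zero, where w(p), w'(p), w''(p), etc. are arbitrary complex numbers (nine free variables). -/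
/-- The Leibniz-expanded Jacobi identity for the bracket
`{w(p),w(q)} = pⁿ w'(p) w(q) − qⁿ w'(q) w(p)`: the explicit expanded expression for
`{{w(p),w(q)},w(r)}` plus its two cyclic permutations in `(p,q,r)` vanishes, where
`wp, wp', wp''`, etc. denote the (arbitrary) values of `w, w', w''` at `p, q, r`. -/
theorem stmt_8 (n : ℕ) (p q r wp wq wr wp' wq' wr' wp'' wq'' wr'' : ℂ) :
    -- {{w(p),w(q)},w(r)}
    (p ^ (2 * n) * wq * wp'' * wr - q ^ (2 * n) * wp * wq'' * wr
      - 2 * p ^ n * r ^ n * wp' * wr' * wq + 2 * q ^ n * r ^ n * wq' * wr' * wp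
      + (n : ℂ) * p ^ (2 * n - 1) * wq * wp' * wr
      - (n : ℂ) * q ^ (2 * n - 1) * wp * wq' * wr)
    -- {{w(r),w(p)},w(q)}
    + (r ^ (2 * n) * wp * wr'' * wq - p ^ (2 * n) * wr * wp'' * wq
      - 2 * r ^ n * q ^ n * wr' * wq' * wp + 2 * p ^ n * q ^ n * wp' * wq' * wr
      + (n : ℂ) * r ^ (2 * n - 1) * wp * wr' * wq
      - (n : ℂ) * p ^ (2 * n - 1) * wr * wp' * wq)
    -- {{w(q),w(r)},w(p)}
    + (q ^ (2 * n) * wr * wq'' * wp - r ^ (2 * n) * wq * wr'' * wp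
      - 2 * q ^ n * p ^ n * wq' * wp' * wr + 2 * r ^ n * p ^ n * wr' * wp' * wq
      + (n : ℂ) * q ^ (2 * n - 1) * wr * wq' * wp
      - (n : ℂ) * r ^ (2 * n - 1) * wq * wr' * wp) = 0 := by
  -- each monomial occurs in exactly two of the three brackets, with opposite signs
  ring
end
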